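/- arXiv:1608.01577 — 2 statements merged into one kernel-verified Lean document; each statement's English description precedes it below -/
import Mathlib

section
/- Let Ω be a finite probability space with a filtration F_0 ⊆ ... ⊆ F_n. Suppose for each 1 ≤ i ≤ n there is a nonnegative real a_i and an F_i-measurable random variable Y_i with 0 ≤ Y_i ≤ a_i. Let μ, ν ≥ 0 and let E be an event with P[E] > 0. Suppose that almost surely, either E does not occur or |Σ_{i=1}^n E[Y_i | F_{i-1}] - μ| ≤ ν. Then for each t > 0, P[E and |Σ_{i=1}^n Y_i - μ| ≥ ν + t] ≤ 2·exp(-2t² / Σ_{i=1}^n a_i²). -/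
/-!
The centred increments `Y i - E[Y i | ℱ (i - 1)]` are conditionally sub-Gaussian with variance
proxy `a i ^ 2 / 4`: this is the conditional form of Hoeffding's lemma, obtained by bounding
`exp (t * Y i)` by its chord on `[0, a i]` and applying Hoeffding's lemma for a Bernoulli variable
to the conditional mean. Peeling off one increment at a time with the tower property shows that
the martingale `S = ∑ (Y i - E[Y i | ℱ (i - 1)])` has sub-Gaussian mgf with proxy `∑ a i ^ 2 / 4`,
so Chernoff's bound gives `P[|S| ≥ t] ≤ 2 exp (-2 t² / ∑ a i²)`. On `E` the compensator
`∑ E[Y i | ℱ (i - 1)]` lies within `ν` of `μ₀`, so a deviation of `∑ Y i` from `μ₀` by at least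
`ν + t` forces `|S| ≥ t`.
-/

open MeasureTheory ProbabilityTheory Finset Real
open scoped NNReal

namespace Real

/-- Hoeffding's lemma for a centred Bernoulli(`p`) variable, multiplied through by `exp (p * t)`. -/
theorem one_sub_add_mul_exp_le {p : ℝ} (hp₀ : 0 ≤ p) (hp₁ : p ≤ 1) (t : ℝ) :
    1 - p + p * exp t ≤ exp (p * t + t ^ 2 / 8) := by
  set q : unitInterval := ⟨p, hp₀, hp₁⟩
  have hX : HasSubgaussianMGF (fun z ↦ z - p) ((‖(1 - p) - (-p)‖₊ / 2) ^ 2) Ber((1 : ℝ), 0, q) := by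
    refine hasSubgaussianMGF_of_mem_Icc_of_integral_eq_zero (by fun_prop) ?_ ?_
    · rw [ae_iff]
      exact bernoulliMeasure_apply_of_notMem_of_notMem q (by measurability) (by simp) (by simp)
    · simp [integral_bernoulliMeasure, q]; ring
  have hmgf := hX.mgf_le t
  simp only [mgf, integral_bernoulliMeasure, q, smul_eq_mul, zero_sub] at hmgf
  norm_num at hmgf
  calc 1 - p + p * exp t = exp (p * t) * (p * exp (t * (1 - p)) + (1 - p) * exp (-(t * p))) := by
        have h₁ : exp (p * t) * exp (t * (1 - p)) = exp t := by rw [← exp_add]; ring_nf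
        have h₂ : exp (p * t) * exp (-(t * p)) = 1 := by rw [← exp_add, ← exp_zero]; ring_nf
        linear_combination -p * h₁ - (1 - p) * h₂
    _ ≤ exp (p * t) * exp (t ^ 2 / 8) := by
        gcongr
        exact hmgf.trans_eq (by ring_nf)
    _ = exp (p * t + t ^ 2 / 8) := (exp_add _ _).symm

theorem exp_mul_le_chord {a y : ℝ} (ha : 0 < a) (hy : y ∈ Set.Icc 0 a) (t : ℝ) :
    exp (t * y) ≤ (exp (t * a) - 1) / a * y + 1 := by
  have hθ₀ : 0 ≤ y / a := div_nonneg hy.1 ha.le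
  have hθ₁ : 0 ≤ 1 - y / a := by rw [sub_nonneg, div_le_one ha]; exact hy.2
  calc exp (t * y) = exp ((1 - y / a) • 0 + (y / a) • (t * a)) := by
        congr 1; simp only [smul_eq_mul, mul_zero, zero_add]; field_simp
    _ ≤ (1 - y / a) • exp 0 + (y / a) • exp (t * a) :=
        convexOn_exp.2 (Set.mem_univ 0) (Set.mem_univ (t * a)) hθ₁ hθ₀ (by ring)
    _ = (exp (t * a) - 1) / a * y + 1 := by simp only [smul_eq_mul, exp_zero]; field_simp; ring

end Real

namespace ProbabilityTheory

variable {Ω : Type*} {m mΩ : MeasurableSpace Ω} {μ : Measure Ω}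

theorem integrable_of_finite [Finite Ω] [IsFiniteMeasure μ] {f : Ω → ℝ} (hf : Measurable f) :
    Integrable f μ := by
  obtain ⟨C, hC⟩ := (Set.finite_range fun ω ↦ ‖f ω‖).bddAbove
  exact .of_bound hf.aestronglyMeasurable C (ae_of_all _ fun ω ↦ hC ⟨ω, rfl⟩)

section Conditional

variable [IsFiniteMeasure μ] {Y : Ω → ℝ} {a : ℝ}

theorem condExp_mem_Icc (hm : m ≤ mΩ) (hY : Measurable Y) (hbd : ∀ ω, Y ω ∈ Set.Icc 0 a) :
    ∀ᵐ ω ∂μ, μ[Y | m] ω ∈ Set.Icc 0 a := by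
  have hYint : Integrable Y μ := .of_mem_Icc 0 a hY.aemeasurable (ae_of_all _ hbd)
  filter_upwards [condExp_nonneg (m := m) (ae_of_all μ fun ω ↦ (hbd ω).1),
    condExp_mono (m := m) hYint (integrable_const a) (ae_of_all μ fun ω ↦ (hbd ω).2)]
    with ω h₀ h₁
  exact ⟨h₀, h₁.trans_eq (by rw [condExp_const hm])⟩

theorem condExp_exp_mul_le (hm : m ≤ mΩ) (hY : Measurable Y) (hbd : ∀ ω, Y ω ∈ Set.Icc 0 a)
    (t : ℝ) :
    μ[fun ω ↦ exp (t * Y ω) | m] ≤ᵐ[μ] fun ω ↦ exp (t * μ[Y | m] ω + t ^ 2 * a ^ 2 / 8) := by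
  rcases le_or_gt a 0 with ha | ha
  · have hY0 : Y = 0 := funext fun ω ↦ le_antisymm ((hbd ω).2.trans ha) (hbd ω).1
    refine ae_of_all _ fun ω ↦ ?_
    simp only [hY0, Pi.zero_apply, mul_zero, exp_zero, condExp_zero, zero_add]
    rw [condExp_const hm]
    exact one_le_exp (by positivity)
  set κ := (exp (t * a) - 1) / a
  have hYint : Integrable Y μ := .of_mem_Icc 0 a hY.aemeasurable (ae_of_all _ hbd)
  have hchord : μ[fun ω ↦ exp (t * Y ω) | m] ≤ᵐ[μ] μ[fun ω ↦ κ * Y ω + 1 | m] :=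
    condExp_mono (integrable_exp_mul_of_mem_Icc hY.aemeasurable (ae_of_all _ hbd))
      ((hYint.const_mul κ).add (integrable_const 1))
      (ae_of_all _ fun ω ↦ exp_mul_le_chord ha (hbd ω) t)
  have haffine := (ContinuousLinearMap.mul ℝ ℝ κ).comp_condExp_add_const_comm hm hYint 1
  filter_upwards [hchord, haffine, condExp_mem_Icc hm hY hbd] with ω h₁ h₂ hp
  have hp' : μ[Y | m] ω / a ∈ Set.Icc 0 1 :=
    ⟨div_nonneg hp.1 ha.le, div_le_one_of_le₀ hp.2 ha.le⟩
  calc μ[fun ω ↦ exp (t * Y ω) | m] ω ≤ κ * μ[Y | m] ω + 1 := h₁.trans_eq h₂.symm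
    _ = 1 - μ[Y | m] ω / a + μ[Y | m] ω / a * exp (t * a) := by simp only [κ]; field_simp; ring
    _ ≤ exp (μ[Y | m] ω / a * (t * a) + (t * a) ^ 2 / 8) := one_sub_add_mul_exp_le hp'.1 hp'.2 _
    _ = exp (t * μ[Y | m] ω + t ^ 2 * a ^ 2 / 8) := by congr 1; field_simp

theorem HasSubgaussianMGF.add_sub_condExp [Finite Ω] {X : Ω → ℝ} {c : ℝ≥0}
    (hm : m ≤ mΩ) (hXm : Measurable[m] X) (hX : HasSubgaussianMGF X c μ) (hY : Measurable Y)
    (hbd : ∀ ω, Y ω ∈ Set.Icc 0 a) :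
    HasSubgaussianMGF (fun ω ↦ X ω + (Y ω - μ[Y | m] ω)) (c + (‖a‖₊ / 2) ^ 2) μ := by
  have hYm : Measurable[m] (μ[Y | m]) := stronglyMeasurable_condExp.measurable
  have hXm' : Measurable X := hXm.mono hm le_rfl
  have hYm' : Measurable (μ[Y | m]) := hYm.mono hm le_rfl
  refine ⟨fun t ↦ integrable_of_finite (by fun_prop), fun t ↦ ?_⟩
  set f : Ω → ℝ := fun ω ↦ exp (t * X ω - t * μ[Y | m] ω)
  set g : Ω → ℝ := fun ω ↦ exp (t * Y ω)
  have hf : Measurable[m] f := by fun_prop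
  have hf' := hf.mono hm le_rfl
  have hg : Measurable g := by fun_prop
  have hcg : Measurable (μ[g | m]) := stronglyMeasurable_condExp.measurable.mono hm le_rfl
  calc mgf (fun ω ↦ X ω + (Y ω - μ[Y | m] ω)) μ t = ∫ ω, (f * g) ω ∂μ := by
        simp only [mgf, f, g, Pi.mul_apply, ← exp_add]; congr with ω; ring_nf
    _ = ∫ ω, f ω * μ[g | m] ω ∂μ := by
        rw [← integral_condExp hm]
        exact integral_congr_ae (condExp_mul_of_stronglyMeasurable_left hf.stronglyMeasurable
          (integrable_of_finite (hf'.mul hg)) (integrable_of_finite hg))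
    _ ≤ ∫ ω, exp (t * X ω) * exp (t ^ 2 * a ^ 2 / 8) ∂μ := by
        refine integral_mono_ae (integrable_of_finite (by fun_prop))
          (integrable_of_finite (by fun_prop)) ?_
        filter_upwards [condExp_exp_mul_le (μ := μ) hm hY hbd t] with ω hω
        calc f ω * μ[g | m] ω ≤ f ω * exp (t * μ[Y | m] ω + t ^ 2 * a ^ 2 / 8) := by gcongr
          _ = exp (t * X ω) * exp (t ^ 2 * a ^ 2 / 8) := by
            simp only [f, ← exp_add]; ring_nf
    _ = mgf X μ t * exp (t ^ 2 * a ^ 2 / 8) := integral_mul_const _ _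
    _ ≤ exp (c * t ^ 2 / 2) * exp (t ^ 2 * a ^ 2 / 8) := by gcongr; exact hX.mgf_le t
    _ = exp (((c + (‖a‖₊ / 2) ^ 2 : ℝ≥0) : ℝ) * t ^ 2 / 2) := by
        rw [← exp_add]; congr 1; push_cast; rw [Real.norm_eq_abs, div_pow, sq_abs]; ring

end Conditional

theorem hasSubgaussianMGF_sum_sub_condExp [Finite Ω] [IsZeroOrProbabilityMeasure μ]
    {ℱ : Filtration ℕ mΩ} {a : ℕ → ℝ} {Y : ℕ → Ω → ℝ} {n : ℕ}
    (hYm : ∀ i ∈ Icc 1 n, Measurable[ℱ i] (Y i))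
    (hbd : ∀ i ∈ Icc 1 n, ∀ ω, Y i ω ∈ Set.Icc 0 (a i)) :
    HasSubgaussianMGF (fun ω ↦ ∑ i ∈ Icc 1 n, (Y i ω - μ[Y i | ℱ (i - 1)] ω))
      (∑ i ∈ Icc 1 n, (‖a i‖₊ / 2) ^ 2) μ := by
  induction n with
  | zero => simp
  | succ n ih =>
    have hmem : n + 1 ∈ Icc 1 (n + 1) := by simp
    have hsub : Icc 1 n ⊆ Icc 1 (n + 1) := Icc_subset_Icc_right n.le_succ
    simp only [sum_Icc_succ_top (Nat.le_add_left 1 n), Nat.add_sub_cancel]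
    refine (ih (fun i hi ↦ hYm i (hsub hi)) (fun i hi ↦ hbd i (hsub hi))).add_sub_condExp
      (ℱ.le n) ?_ ((hYm _ hmem).mono (ℱ.le _) le_rfl) (hbd _ hmem)
    refine Finset.measurable_sum _ fun i hi ↦ ?_
    have hin : i ≤ n := (mem_Icc.1 hi).2
    exact ((hYm i (hsub hi)).mono (ℱ.mono hin) le_rfl).sub
      (stronglyMeasurable_condExp.measurable.mono (ℱ.mono (by omega)) le_rfl)

theorem HasSubgaussianMGF.measureReal_abs_ge_le [IsFiniteMeasure μ] {X : Ω → ℝ} {c : ℝ≥0}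
    (h : HasSubgaussianMGF X c μ) {ε : ℝ} (hε : 0 ≤ ε) :
    μ.real {ω | ε ≤ |X ω|} ≤ 2 * exp (-ε ^ 2 / (2 * c)) := by
  have hsplit : {ω | ε ≤ |X ω|} ⊆ {ω | ε ≤ X ω} ∪ {ω | ε ≤ (-X) ω} :=
    fun ω (hω : ε ≤ |X ω|) ↦ le_abs.1 hω
  calc μ.real {ω | ε ≤ |X ω|} ≤ μ.real {ω | ε ≤ X ω} + μ.real {ω | ε ≤ (-X) ω} :=
        (measureReal_mono hsplit).trans (measureReal_union_le _ _)
    _ ≤ exp (-ε ^ 2 / (2 * c)) + exp (-ε ^ 2 / (2 * c)) :=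
        add_le_add (h.measure_ge_le hε) (h.neg.measure_ge_le hε)
    _ = 2 * exp (-ε ^ 2 / (2 * c)) := by ring

end ProbabilityTheory

theorem sequential_hoeffding_general
    {Ω : Type*} [Fintype Ω] {mΩ : MeasurableSpace Ω}
    (P : Measure Ω) [IsProbabilityMeasure P]
    (n : ℕ) (ℱ : Filtration ℕ mΩ)
    (a : ℕ → ℝ)
    (Y : ℕ → Ω → ℝ)
    (hYmeas : ∀ i ∈ Finset.Icc 1 n, Measurable[ℱ i] (Y i))
    (hYbd : ∀ i ∈ Finset.Icc 1 n, ∀ ω, 0 ≤ Y i ω ∧ Y i ω ≤ a i)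
    (μ₀ ν : ℝ)
    (E : Set Ω)
    (hcond : ∀ᵐ ω ∂P, ω ∈ E →
      |(∑ i ∈ Finset.Icc 1 n, (P[Y i | ℱ (i - 1)]) ω) - μ₀| ≤ ν)
    (t : ℝ) (ht : 0 < t) :
    (P (E ∩ {ω | ν + t ≤ |(∑ i ∈ Finset.Icc 1 n, Y i ω) - μ₀|})).toReal ≤
      2 * Real.exp (-2 * t ^ 2 / ∑ i ∈ Finset.Icc 1 n, a i ^ 2) := by
  set S := fun ω ↦ ∑ i ∈ Icc 1 n, (Y i ω - P[Y i | ℱ (i - 1)] ω)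
  have hS := hasSubgaussianMGF_sum_sub_condExp (μ := P) hYmeas hYbd
  have hsub : (E ∩ {ω | ν + t ≤ |(∑ i ∈ Icc 1 n, Y i ω) - μ₀|} : Set Ω)
      ≤ᵐ[P] ({ω | t ≤ |S ω|} : Set Ω) := by
    filter_upwards [hcond] with ω hω ⟨hE, hdev⟩
    have htri := abs_sub_le (∑ i ∈ Icc 1 n, Y i ω) (∑ i ∈ Icc 1 n, P[Y i | ℱ (i - 1)] ω) μ₀
    change t ≤ |S ω|
    rw [show S ω = _ from sum_sub_distrib _ _]
    linarith [hω hE, show ν + t ≤ _ from hdev]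
  calc (P (E ∩ {ω | ν + t ≤ |(∑ i ∈ Icc 1 n, Y i ω) - μ₀|})).toReal ≤ P.real {ω | t ≤ |S ω|} :=
        ENNReal.toReal_mono (measure_ne_top _ _) (measure_mono_ae hsub)
    _ ≤ 2 * exp (-t ^ 2 / (2 * ((∑ i ∈ Icc 1 n, (‖a i‖₊ / 2) ^ 2 : ℝ≥0) : ℝ))) :=
        hS.measureReal_abs_ge_le ht.le
    _ = 2 * exp (-2 * t ^ 2 / ∑ i ∈ Icc 1 n, a i ^ 2) := by
        push_cast
        simp only [Real.norm_eq_abs, div_pow, sq_abs, ← sum_div]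
        ring_nf

/-- **Sequential Hoeffding bound** (Lemma 2.3). On a finite probability space with a
filtration `ℱ`, if `0 ≤ Y i ≤ a i` is `ℱ i`-measurable and, almost surely, either the
event `E` fails or `|∑ E[Y i | ℱ (i-1)] - μ₀| ≤ ν`, then
`P[E and |∑ Y i - μ₀| ≥ ν + t] ≤ 2 exp (-2 t² / ∑ a i²)`. -/
theorem sequential_hoeffding
    {Ω : Type*} [Fintype Ω] {mΩ : MeasurableSpace Ω}
    (P : Measure Ω) [IsProbabilityMeasure P]
    (n : ℕ) (ℱ : Filtration ℕ mΩ)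
    (a : ℕ → ℝ) (ha : ∀ i ∈ Finset.Icc 1 n, 0 ≤ a i)
    (Y : ℕ → Ω → ℝ)
    (hYmeas : ∀ i ∈ Finset.Icc 1 n, Measurable[ℱ i] (Y i))
    (hYbd : ∀ i ∈ Finset.Icc 1 n, ∀ ω, 0 ≤ Y i ω ∧ Y i ω ≤ a i)
    (μ₀ ν : ℝ) (hμ₀ : 0 ≤ μ₀) (hν : 0 ≤ ν)
    (E : Set Ω) (hEmeas : MeasurableSet E) (hE : 0 < P E)
    (hcond : ∀ᵐ ω ∂P, ω ∈ E →
      |(∑ i ∈ Finset.Icc 1 n, (P[Y i | ℱ (i - 1)]) ω) - μ₀| ≤ ν)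
    (t : ℝ) (ht : 0 < t) :
    (P (E ∩ {ω | ν + t ≤ |(∑ i ∈ Finset.Icc 1 n, Y i ω) - μ₀|})).toReal ≤
      2 * Real.exp (-2 * t ^ 2 / ∑ i ∈ Finset.Icc 1 n, a i ^ 2) :=
  sequential_hoeffding_general P n ℱ a Y hYmeas hYbd μ₀ ν E hcond t ht
end

section
/- Let T be a tree on n vertices, let R ⊆ E(T), and suppose every connected component of T − R has at most s vertices. Then there exists an ordering v_1, ..., v_n of V(T) such that (a) for each i ≥ 2 the vertex v_i has exactly one neighbour among {v_1,...,v_{i−1}}, and (b) each component of T − R occupies a set of consecutive positions in the ordering; consequently, for every edge v_i v_j ∈ E(T) \ R we have |i − j| ≤ s. -/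
/-!
Grow the ordering one component of `T - R` at a time. The vertices placed so far always form a
union of whole components, each occupying a block of consecutive positions, and the ordering so
far has every vertex after the first adjacent to an earlier one. While some vertex is missing,
connectivity of `T` gives a tree edge `ab` with `a` placed and `b` not; append an ordering of the
component of `b` that starts at `b` and in which each vertex has an earlier neighbour inside the
component. Since every prefix spans a connected subgraph and `T` is acyclic, no vertex can have two
earlier neighbours. An edge outside `R` lies inside one component, hence inside one block of at
most `s` positions.
-/

theorem List.exists_nodup_forall_mem_of_extend {α : Type*} [Finite α] (P : List α → Prop)
    {l₀ : List α} (h₀ : P l₀) (hnd₀ : l₀.Nodup)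
    (hstep : ∀ l, P l → l.Nodup → ∀ y, y ∉ l → ∃ m ≠ [], P (l ++ m) ∧ (l ++ m).Nodup) :
    ∃ l, P l ∧ l.Nodup ∧ ∀ y, y ∈ l := by
  have := Fintype.ofFinite α
  induction hn : Fintype.card α - l₀.length using Nat.strong_induction_on generalizing l₀ with
  | _ n ih =>
  by_cases hall : ∀ y, y ∈ l₀
  · exact ⟨l₀, h₀, hnd₀, hall⟩
  obtain ⟨y, hy⟩ := not_forall.1 hall
  obtain ⟨m, hm, hPm, hndm⟩ := hstep l₀ h₀ hnd₀ y hy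
  have hle := hndm.length_le_card
  have hpos := List.length_pos_iff.2 hm
  rw [List.length_append] at hle
  exact ih _ (by rw [List.length_append]; omega) hPm hndm rfl

theorem List.Nodup.length_eq_ncard {α : Type*} {l : List α} {s : Set α} (hl : l.Nodup)
    (hs : ∀ y, y ∈ l ↔ y ∈ s) : l.length = s.ncard := by
  classical
  rw [show s = l.toFinset by ext; simp [hs], Set.ncard_coe_finset, List.toFinset_card_of_nodup hl]

theorem List.Nodup.exists_getElem_mem_iff_of_infix {α : Type*} {L m : List α} {s : Set α}
    (hL : L.Nodup) (hm : m <:+: L) (hms : ∀ y, y ∈ m ↔ y ∈ s) :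
    ∃ lo, ∀ i (hi : i < L.length), L[i] ∈ s ↔ lo ≤ i ∧ i < lo + s.ncard := by
  rw [← (hL.sublist hm.sublist).length_eq_ncard hms]
  simp only [← hms]
  obtain ⟨l₁, l₂, rfl⟩ := hm
  refine ⟨l₁.length, fun i hi ↦ ⟨fun hmem ↦ ?_, fun ⟨h₁, h₂⟩ ↦ ?_⟩⟩
  · obtain ⟨k, hk, hkm⟩ := List.getElem_of_mem hmem
    have hget : (l₁ ++ m ++ l₂)[l₁.length + k]'(by simp; omega) = m[k] := by
      rw [List.getElem_append_left (by simp; omega), List.getElem_append_right (by omega)]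
      simp
    have := hL.getElem_inj_iff.1 (hget.trans hkm)
    omega
  · have hget : (l₁ ++ m ++ l₂)[i] = m[i - l₁.length] := by
      rw [List.getElem_append_left (by simp; omega), List.getElem_append_right h₁]
    exact hget ▸ List.getElem_mem _

namespace SimpleGraph

variable {V W : Type*} {G : SimpleGraph V}

lemma IsAcyclic.eq_of_adj_of_preconnected_induce (hG : G.IsAcyclic) {s : Set V}
    (hs : (G.induce s).Preconnected) {x a b : V} (hx : x ∉ s) (ha : a ∈ s) (hb : b ∈ s)
    (hax : G.Adj a x) (hbx : G.Adj b x) : a = b := by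
  -- `s(a, x)` is a bridge, but the walk from `a` to `b` inside `s` followed by `bx` avoids it.
  obtain ⟨w⟩ := hs ⟨a, ha⟩ ⟨b, hb⟩
  let w' : G.Walk a b := w.map (Embedding.induce s).toHom
  have hmem := isBridge_iff_forall_walk_mem_edges.1 (isAcyclic_iff_forall_adj_isBridge.1 hG hax)
    (w'.concat hbx)
  simp only [Walk.edges_concat, List.concat_eq_append, List.mem_append, List.mem_singleton] at hmem
  rcases hmem with hmem | hmem
  · obtain ⟨y, -, rfl⟩ :=
      List.mem_map.1 <| (Walk.support_map _ w) ▸ Walk.snd_mem_support_of_mem_edges _ hmem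
    exact absurd y.2 hx
  · simpa [hax.ne] using hmem

lemma Preconnected.exists_adj_of_mem_of_notMem (hG : G.Preconnected) {s : Set V} {a y : V}
    (ha : a ∈ s) (hy : y ∉ s) : ∃ u ∈ s, ∃ b ∉ s, G.Adj u b := by
  obtain ⟨p⟩ := hG a y
  obtain ⟨d, -, hd, hd'⟩ := p.exists_boundary_dart s ha hy
  exact ⟨d.fst, hd, d.snd, hd', d.adj⟩

def IsConnectedOrder (G : SimpleGraph V) (l : List V) : Prop :=
  ∀ p x q, l = p ++ x :: q → p ≠ [] → ∃ u ∈ p, G.Adj u x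

namespace IsConnectedOrder

variable {l m : List V}

lemma singleton (x : V) : G.IsConnectedOrder [x] := by
  intro p y q h hp
  obtain ⟨⟩ | ⟨a, _ | ⟨b, p⟩⟩ := p <;> simp_all

lemma of_append_left (h : G.IsConnectedOrder (l ++ m)) : G.IsConnectedOrder l :=
  fun p x q hl hp ↦ h p x (q ++ m) (by simp [hl]) hp

lemma append (hl : G.IsConnectedOrder l) (hm : G.IsConnectedOrder m)
    (hlm : l ≠ [] → ∀ y ∈ m.head?, ∃ u ∈ l, G.Adj u y) : G.IsConnectedOrder (l ++ m) := by
  intro p x q h hp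
  rcases List.append_eq_append_iff.1 h with ⟨a, rfl, hma⟩ | ⟨c, rfl, hxq⟩
  · rcases a with _ | ⟨b, a⟩
    · simp only [List.append_nil, List.nil_append] at hp hma
      simpa using hlm hp x (by simp [hma])
    · obtain ⟨u, hu, hux⟩ := hm (b :: a) x q hma (List.cons_ne_nil _ _)
      exact ⟨u, by simp_all, hux⟩
  · rcases c with _ | ⟨y, c⟩
    · simp only [List.nil_append] at hxq
      simpa using hlm (by simpa using hp) x (by simp [← hxq])
    · obtain ⟨rfl, rfl⟩ := List.cons_eq_cons.1 hxq
      exact hl p x c rfl hp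

lemma map {G' : SimpleGraph W} (f : G →g G') (h : G.IsConnectedOrder l) :
    G'.IsConnectedOrder (l.map f) := by
  intro p x q hl hp
  obtain ⟨p', xq, rfl, rfl, hxq⟩ := List.map_eq_append_iff.1 hl
  obtain ⟨x', q', rfl, rfl, rfl⟩ := List.map_eq_cons_iff.1 hxq
  obtain ⟨u, hu, hux⟩ := h p' x' q' rfl (by simpa using hp)
  exact ⟨f u, List.mem_map_of_mem hu, f.map_adj hux⟩

lemma mono {G' : SimpleGraph V} (hle : G ≤ G') (h : G.IsConnectedOrder l) :
    G'.IsConnectedOrder l := by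
  simpa using h.map (Hom.ofLE hle)

lemma preconnected_induce (h : G.IsConnectedOrder l) : (G.induce {v | v ∈ l}).Preconnected := by
  induction l using List.reverseRecOn with
  | nil => exact fun ⟨_, hv⟩ ↦ absurd hv List.not_mem_nil
  | append_singleton l x ih =>
    have hx : (G.induce {x}).Preconnected := by
      rintro ⟨a, rfl⟩ ⟨b, rfl⟩
      rfl
    rcases eq_or_ne l [] with rfl | hne
    · rwa [show {v | v ∈ [] ++ [x]} = {x} by ext; simp]
    obtain ⟨u, hu, hux⟩ := h l x [] rfl hne
    have hset : {v | v ∈ l ++ [x]} = {v | v ∈ l} ∪ {x} := by ext; simp [or_comm]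
    rw [hset]
    exact (connected_induce_union (ih h.of_append_left) hx hu rfl hux).preconnected

lemma existsUnique_adj (hG : G.IsAcyclic) (hnd : l.Nodup) (h : G.IsConnectedOrder l)
    {p q : List V} {x : V} (hl : l = p ++ x :: q) (hp : p ≠ []) : ∃! u, u ∈ p ∧ G.Adj u x := by
  subst hl
  obtain ⟨u, hu, hux⟩ := h p x q rfl hp
  have hxp : x ∉ p := fun hx ↦ (List.nodup_append.1 hnd).2.2 x hx x List.mem_cons_self rfl
  exact ⟨u, ⟨hu, hux⟩, fun w ⟨hw, hwx⟩ ↦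
    hG.eq_of_adj_of_preconnected_induce h.of_append_left.preconnected_induce hxp hw hu hwx hux⟩

lemma existsUnique_get (hG : G.IsAcyclic) (hnd : l.Nodup) (h : G.IsConnectedOrder l)
    (i : Fin l.length) (hi : 0 < (i : ℕ)) :
    ∃! j : Fin l.length, (j : ℕ) < i ∧ G.Adj (l.get j) (l.get i) := by
  have hl : l = l.take i ++ l.get i :: l.drop (i + 1) := by simp [List.getElem_cons_drop]
  obtain ⟨u, ⟨hu, hux⟩, huniq⟩ :=
    h.existsUnique_adj hG hnd hl (by simp [hi.ne', List.ne_nil_of_length_pos i.pos])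
  obtain ⟨j, hj, rfl⟩ := List.mem_take_iff_getElem.1 hu
  refine ⟨⟨j, by omega⟩, ⟨by simp; omega, hux⟩, fun k ⟨hk, hkx⟩ ↦ ?_⟩
  exact hnd.get_inj_iff.1 (huniq _ ⟨List.mem_take_iff_getElem.2 ⟨k, by omega, rfl⟩, hkx⟩)

end IsConnectedOrder

theorem Preconnected.exists_isConnectedOrder [Finite V] (hG : G.Preconnected) (x : V) :
    ∃ l : List V, l.Nodup ∧ (∀ y, y ∈ l) ∧ l.head? = some x ∧ G.IsConnectedOrder l := by
  refine (List.exists_nodup_forall_mem_of_extend (fun l ↦ l.head? = some x ∧ G.IsConnectedOrder l)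
    ⟨rfl, .singleton x⟩ (List.nodup_singleton x) ?_).imp
    fun l ⟨⟨hx, hl⟩, hnd, hall⟩ ↦ ⟨hnd, hall, hx, hl⟩
  rintro l ⟨hx, hl⟩ hnd y hy
  obtain ⟨u, hu, b, hb, hub⟩ :=
    hG.exists_adj_of_mem_of_notMem (s := {v | v ∈ l}) (List.mem_of_mem_head? hx) hy
  refine ⟨[b], List.cons_ne_nil _ _, ⟨?_, hl.append (.singleton b) ?_⟩, ?_⟩
  · simp [List.head?_append, hx]
  · simpa using fun _ ↦ ⟨u, hu, hub⟩
  · exact List.nodup_append.2 ⟨hnd, List.nodup_singleton b, by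
      simpa using fun a ha (hab : a = b) ↦ hb (hab ▸ ha)⟩

theorem ConnectedComponent.exists_isConnectedOrder [Finite V] (c : G.ConnectedComponent) {x : V}
    (hx : x ∈ c.supp) :
    ∃ m : List V, m.Nodup ∧ (∀ y, y ∈ m ↔ y ∈ c.supp) ∧ m.head? = some x ∧
      G.IsConnectedOrder m := by
  obtain ⟨m, hnd, hall, hxm, hm⟩ :=
    c.connected_toSimpleGraph.preconnected.exists_isConnectedOrder ⟨x, hx⟩
  refine ⟨m.map Subtype.val, hnd.map Subtype.val_injective, fun y ↦ ⟨?_, fun hy ↦ ?_⟩,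
    by rw [List.head?_map, hxm]; rfl, hm.map c.toSimpleGraph_hom⟩
  · simp only [List.mem_map]
    rintro ⟨y, -, rfl⟩
    exact y.2
  · exact List.mem_map_of_mem (f := Subtype.val) (hall ⟨y, hy⟩)

theorem Preconnected.exists_isConnectedOrder_infix_supp [Finite V] {H : SimpleGraph V}
    (hG : G.Preconnected) (hHG : H ≤ G) :
    ∃ l : List V, l.Nodup ∧ (∀ y, y ∈ l) ∧ G.IsConnectedOrder l ∧
      ∀ c : H.ConnectedComponent, ∃ m, m <:+: l ∧ ∀ y, y ∈ m ↔ y ∈ c.supp := by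
  refine (List.exists_nodup_forall_mem_of_extend (fun l ↦ G.IsConnectedOrder l ∧
      ∀ c : H.ConnectedComponent, (∃ x ∈ l, x ∈ c.supp) → ∃ m, m <:+: l ∧ ∀ y, y ∈ m ↔ y ∈ c.supp)
    ⟨by simp [IsConnectedOrder], by simp⟩ List.nodup_nil ?_).imp
    fun l ⟨⟨hl, hblock⟩, hnd, hall⟩ ↦ ⟨hnd, hall, hl, fun c ↦ hblock c ⟨c.out, hall _, c.out_eq⟩⟩
  rintro l ⟨hl, hblock⟩ hnd y hy
  obtain ⟨b, hb, hab⟩ : ∃ b ∉ l, l ≠ [] → ∃ a ∈ l, G.Adj a b := by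
    rcases l with _ | ⟨a, l⟩
    · exact ⟨y, hy, fun h ↦ absurd rfl h⟩
    · obtain ⟨u, hu, b, hb, hub⟩ :=
        hG.exists_adj_of_mem_of_notMem (s := {v | v ∈ a :: l}) List.mem_cons_self hy
      exact ⟨b, hb, fun _ ↦ ⟨u, hu, hub⟩⟩
  obtain ⟨m, hndm, hmc, hmb, hm⟩ := (H.connectedComponentMk b).exists_isConnectedOrder rfl
  have hdisj : ∀ z ∈ m, z ∉ l := by
    intro z hz hzl
    obtain ⟨m', hm', hm'c⟩ := hblock _ ⟨z, hzl, (hmc z).1 hz⟩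
    exact hb (hm'.subset ((hm'c b).2 rfl))
  refine ⟨m, List.ne_nil_of_mem ((hmc b).2 rfl), ⟨hl.append (hm.mono hHG) ?_, ?_⟩,
    List.nodup_append.2 ⟨hnd, hndm, fun z hz z' hz' h ↦ hdisj z' hz' (h ▸ hz)⟩⟩
  · simpa [hmb] using hab
  · rintro c ⟨x, hx, hxc⟩
    rcases List.mem_append.1 hx with hx | hx
    · obtain ⟨m', hm', hm'c⟩ := hblock c ⟨x, hx, hxc⟩
      exact ⟨m', hm'.trans (List.prefix_append l m).isInfix, hm'c⟩
    · obtain rfl : H.connectedComponentMk b = c := ((hmc x).1 hx).symm.trans hxc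
      exact ⟨m, (List.suffix_append l m).isInfix, hmc⟩

end SimpleGraph

theorem tree_order_components_general {V : Type*} [Fintype V]
    (G : SimpleGraph V) (hT : G.IsTree) (R : Set (Sym2 V))
    (s : ℕ)
    (hcomp : ∀ v : V, (((G.deleteEdges R).connectedComponentMk v).supp.ncard ≤ s)) :
    ∃ v : Fin (Fintype.card V) ≃ V,
      (∀ i : Fin (Fintype.card V), 0 < (i : ℕ) →
        ∃! j : Fin (Fintype.card V), (j : ℕ) < (i : ℕ) ∧ G.Adj (v j) (v i)) ∧
      (∀ c : (G.deleteEdges R).ConnectedComponent, ∃ lo hi : ℕ,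
        ∀ i : Fin (Fintype.card V),
          ((G.deleteEdges R).connectedComponentMk (v i) = c ↔
            lo ≤ (i : ℕ) ∧ (i : ℕ) ≤ hi)) ∧
      (∀ i j : Fin (Fintype.card V), G.Adj (v i) (v j) → s(v i, v j) ∉ R →
        (((i : ℕ) : ℤ) - ((j : ℕ) : ℤ)).natAbs ≤ s) := by
  classical
  obtain ⟨L, hnd, hall, hord, hblock⟩ :=
    hT.connected.preconnected.exists_isConnectedOrder_infix_supp (G.deleteEdges_le R)
  have hinterval (c : (G.deleteEdges R).ConnectedComponent) :
      ∃ lo, ∀ i (hi : i < L.length), L[i] ∈ c.supp ↔ lo ≤ i ∧ i < lo + c.supp.ncard := by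
    obtain ⟨m, hm, hmc⟩ := hblock c
    exact hnd.exists_getElem_mem_iff_of_infix hm hmc
  have hlen : L.length = Fintype.card V := by
    simpa using Fintype.card_congr (hnd.getEquivOfForallMemList L hall)
  rw [← hlen]
  refine ⟨hnd.getEquivOfForallMemList L hall, fun i hi ↦ ?_, fun c ↦ ?_, fun i j hadj hij ↦ ?_⟩
  · exact hord.existsUnique_get hT.isAcyclic hnd i hi
  · obtain ⟨lo, hlo⟩ := hinterval c
    have : 0 < c.supp.ncard := (Set.ncard_pos (Set.toFinite _)).2 c.nonempty_supp
    refine ⟨lo, lo + c.supp.ncard - 1, fun i ↦ ?_⟩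
    rw [← SimpleGraph.ConnectedComponent.mem_supp_iff]
    exact (hlo i i.2).trans (by omega)
  · obtain ⟨lo, hlo⟩ := hinterval ((G.deleteEdges R).connectedComponentMk (L.get i))
    have hsame :=
      SimpleGraph.ConnectedComponent.sound (SimpleGraph.deleteEdges_adj.2 ⟨hadj, hij⟩).reachable
    have hmem_i := (hlo i i.2).1 rfl
    have hmem_j := (hlo j j.2).1 hsame.symm
    have := hcomp (L.get i)
    omega

/-- Properties (PRE2) and (PRE3) of Lemma 3.4: if every component of `T - R` has at most
`s` vertices, there is a search ordering of the tree `T` in which (a) every vertex after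
the first has exactly one earlier neighbour, (b) each component of `T - R` occupies a set
of consecutive positions, and consequently every edge of `T` outside `R` joins vertices
whose positions differ by at most `s`. -/
theorem tree_order_components {V : Type*} [Fintype V]
    (G : SimpleGraph V) (hT : G.IsTree) (R : Set (Sym2 V)) (hR : R ⊆ G.edgeSet)
    (s : ℕ)
    (hcomp : ∀ v : V, (((G.deleteEdges R).connectedComponentMk v).supp.ncard ≤ s)) :
    ∃ v : Fin (Fintype.card V) ≃ V,
      (∀ i : Fin (Fintype.card V), 0 < (i : ℕ) →
        ∃! j : Fin (Fintype.card V), (j : ℕ) < (i : ℕ) ∧ G.Adj (v j) (v i)) ∧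
      (∀ c : (G.deleteEdges R).ConnectedComponent, ∃ lo hi : ℕ,
        ∀ i : Fin (Fintype.card V),
          ((G.deleteEdges R).connectedComponentMk (v i) = c ↔
            lo ≤ (i : ℕ) ∧ (i : ℕ) ≤ hi)) ∧
      (∀ i j : Fin (Fintype.card V), G.Adj (v i) (v j) → s(v i, v j) ∉ R →
        (((i : ℕ) : ℤ) - ((j : ℕ) : ℤ)).natAbs ≤ s) :=
  tree_order_components_general G hT R s hcomp
end
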